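/- Let X ⊆ ℙ²_k be a finite set of n points where n = C(d+2,2) + h with 0 ≤ h ≤ d+1, in uniform position, and let g be the least degree of a curve containing X. If either g ≤ d, or g = d+1 and h ≥ 2, then every curve of degree g containing X is irreducible. -/

import Mathlib

open MvPolynomial

/-- Evaluation of degree-`l` homogeneous forms on `ℙ²` (given by representatives in `k³`)
at the points of a finite set `X`. -/
noncomputable def evalMapP2 (k : Type) [Field k] (X : Finset (Fin 3 → k)) (l : ℕ) :
    (homogeneousSubmodule (Fin 3) k l) →ₗ[k] (X → k) where
  toFun f x := eval (x : Fin 3 → k) f.1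
  map_add' f g := by funext x; simp
  map_smul' c f := by funext x; simp

/-- The Hilbert function of a finite set of points of `ℙ²` (given by representatives in `k³`):
`H(X, l)` is the rank of the evaluation map `H⁰(𝒪_{ℙ²}(l)) → H⁰(𝒪_X(l)) = k^X`. -/
noncomputable def hilbertFunction (k : Type) [Field k] (X : Finset (Fin 3 → k)) (l : ℕ) : ℕ :=
  Module.finrank k (LinearMap.range (evalMapP2 k X l))

/-- `h⁰(ℙ², I_X(l))`: the dimension of the space of degree-`l` forms vanishing on `X`. -/
noncomputable def h0IdealSheaf (k : Type) [Field k] (X : Finset (Fin 3 → k)) (l : ℕ) : ℕ :=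
  Module.finrank k (LinearMap.ker (evalMapP2 k X l))

/-- `h¹(ℙ², I_X(l)) = deg X - H(X, l)`, from the exact sequence
`0 → H⁰(I_X(l)) → H⁰(𝒪(l)) → H⁰(𝒪_X(l)) → H¹(I_X(l)) → H¹(𝒪(l)) = 0`. -/
noncomputable def h1IdealSheaf (k : Type) [Field k] (X : Finset (Fin 3 → k)) (l : ℕ) : ℕ :=
  X.card - hilbertFunction k X l

/-- The representatives in `X ⊆ k³` give pairwise distinct points of `ℙ²`. -/
def ProjDistinct (k : Type) [Field k] (X : Finset (Fin 3 → k)) : Prop :=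
  (∀ x ∈ X, x ≠ 0) ∧ ∀ x ∈ X, ∀ y ∈ X, x ≠ y → ∀ c : k, x ≠ c • y

/-- `X` has the Uniform Position Property: any two subsets of the same cardinality
have the same Hilbert function. -/
def UniformPosition (k : Type) [Field k] (X : Finset (Fin 3 → k)) : Prop :=
  ∀ Z₁ Z₂ : Finset (Fin 3 → k), Z₁ ⊆ X → Z₂ ⊆ X → Z₁.card = Z₂.card →
    ∀ i, hilbertFunction k Z₁ i = hilbertFunction k Z₂ i

/-! If a curve `f = a * b` of minimal degree `g` through `X` were reducible, with factors of
degrees `r, s ≥ 1`, then `r, s < g`, so no form of degree `r` or `s` vanishes on all of `X`.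
Some `C(r+2,2)` points of `X` then impose independent conditions on forms of degree `r`, hence
by uniform position any `C(r+2,2)` points of `X` do, and the curve `a = 0` contains fewer than
`C(r+2,2)` points of `X`; likewise for `b`. So `|X| ≤ C(r+2,2) + C(s+2,2) - 2 ≤ C(r+s+1,2) + 1`,
which is less than `C(d+2,2) + h` if `r + s ≤ d`, or if `r + s = d + 1` and `h ≥ 2`. -/

namespace Polynomial

variable {R : Type*} [CommRing R]

lemma natTrailingDegree_eq_natDegree_of_mul_eq_C_mul_X_pow [IsDomain R] {p q : R[X]} {c : R}
    {n : ℕ} (h : p * q = C c * X ^ n) (hc : c ≠ 0) : p.natTrailingDegree = p.natDegree := by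
  have hpq : p * q ≠ 0 := h ▸ mul_ne_zero (C_ne_zero.mpr hc) (pow_ne_zero _ X_ne_zero)
  have hdeg := natDegree_mul (left_ne_zero_of_mul hpq) (right_ne_zero_of_mul hpq)
  have htrail := natTrailingDegree_mul (left_ne_zero_of_mul hpq) (right_ne_zero_of_mul hpq)
  rw [h, natDegree_C_mul_X_pow n c hc] at hdeg
  rw [h, natTrailingDegree_mul (C_ne_zero.mpr hc) (pow_ne_zero _ X_ne_zero),
    natTrailingDegree_C, natTrailingDegree_X_pow, zero_add] at htrail
  have := p.natTrailingDegree_le_natDegree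
  have := q.natTrailingDegree_le_natDegree
  omega

lemma coeff_eq_zero_of_natTrailingDegree_eq_natDegree {p : R[X]}
    (h : p.natTrailingDegree = p.natDegree) {j : ℕ} (hj : j ≠ p.natDegree) : p.coeff j = 0 := by
  rcases hj.lt_or_gt with hlt | hgt
  · exact coeff_eq_zero_of_lt_natTrailingDegree (h ▸ hlt)
  · exact coeff_eq_zero_of_natDegree_lt hgt

end Polynomial

namespace MvPolynomial

section CommRing

variable {σ R : Type*} [CommRing R]

noncomputable def scaleVars : MvPolynomial σ R →+* Polynomial (MvPolynomial σ R) :=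
  eval₂Hom (Polynomial.C.comp C) fun i => Polynomial.C (X i) * Polynomial.X

lemma scaleVars_monomial (s : σ →₀ ℕ) (c : R) :
    scaleVars (monomial s c) = Polynomial.C (monomial s c) * Polynomial.X ^ s.degree := by
  have hprod : (s.prod fun i e => (Polynomial.C (X i : MvPolynomial σ R) * Polynomial.X) ^ e) =
      Polynomial.C (s.prod fun i e => (X i : MvPolynomial σ R) ^ e) * Polynomial.X ^ s.degree := by
    simp_rw [Finsupp.prod, mul_pow, ← Polynomial.C_pow]
    rw [Finset.prod_mul_distrib, ← map_prod, Finset.prod_pow_eq_pow_sum]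
    rfl
  rw [scaleVars, eval₂Hom_monomial, hprod, RingHom.comp_apply, ← mul_assoc, ← map_mul,
    ← monomial_eq]

lemma coeff_scaleVars (p : MvPolynomial σ R) (j : ℕ) :
    (scaleVars p).coeff j = homogeneousComponent j p := by
  induction p using MvPolynomial.induction_on' with
  | monomial s c =>
    rw [scaleVars_monomial, Polynomial.coeff_C_mul, Polynomial.coeff_X_pow,
      homogeneousComponent_of_mem (isHomogeneous_monomial c rfl)]
    simp [mul_ite]
  | add p q hp hq => simp [hp, hq]

lemma IsHomogeneous.scaleVars_eq {p : MvPolynomial σ R} {n : ℕ} (hp : p.IsHomogeneous n) :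
    scaleVars p = Polynomial.C p * Polynomial.X ^ n := by
  ext j : 1
  rw [coeff_scaleVars, Polynomial.coeff_C_mul_X_pow, homogeneousComponent_of_mem hp]

lemma isHomogeneous_of_homogeneousComponent_eq_zero {p : MvPolynomial σ R} {n : ℕ}
    (h : ∀ j ≠ n, homogeneousComponent j p = 0) : p.IsHomogeneous n := by
  intro d hd
  by_contra hne
  have hdeg : d.degree ≠ n := by rwa [Finsupp.degree_eq_weight_one]
  apply hd
  simpa [coeff_homogeneousComponent] using congr_arg (coeff d) (h _ hdeg)

lemma isHomogeneous_of_mul_eq_C_mul_X_pow [IsDomain R] {a b f : MvPolynomial σ R} {n : ℕ}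
    (h : scaleVars a * scaleVars b = Polynomial.C f * Polynomial.X ^ n) (hf0 : f ≠ 0) :
    a.IsHomogeneous (scaleVars a).natDegree :=
  isHomogeneous_of_homogeneousComponent_eq_zero fun j hj => by
    rw [← coeff_scaleVars]
    exact Polynomial.coeff_eq_zero_of_natTrailingDegree_eq_natDegree
      (Polynomial.natTrailingDegree_eq_natDegree_of_mul_eq_C_mul_X_pow h hf0) hj

lemma IsHomogeneous.exists_isHomogeneous_of_mul_eq [IsDomain R] {f a b : MvPolynomial σ R}
    {n : ℕ} (hf : f.IsHomogeneous n) (hf0 : f ≠ 0) (hab : a * b = f) :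
    ∃ r s, r + s = n ∧ a.IsHomogeneous r ∧ b.IsHomogeneous s := by
  -- Under `Xᵢ ↦ t • Xᵢ`, `f` becomes `f • tⁿ`, and over a domain its factors are monomials in `t`.
  have hAB : scaleVars a * scaleVars b = Polynomial.C f * Polynomial.X ^ n := by
    rw [← map_mul, hab, hf.scaleVars_eq]
  have hBA : scaleVars b * scaleVars a = Polynomial.C f * Polynomial.X ^ n := by
    rw [mul_comm, hAB]
  have hfX : Polynomial.C f * Polynomial.X ^ n ≠ 0 :=
    mul_ne_zero (Polynomial.C_ne_zero.mpr hf0) (pow_ne_zero _ Polynomial.X_ne_zero)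
  refine ⟨_, _, ?_, isHomogeneous_of_mul_eq_C_mul_X_pow hAB hf0,
    isHomogeneous_of_mul_eq_C_mul_X_pow hBA hf0⟩
  rw [← Polynomial.natDegree_mul (left_ne_zero_of_mul (hAB ▸ hfX))
    (right_ne_zero_of_mul (hAB ▸ hfX)), hAB, Polynomial.natDegree_C_mul_X_pow n f hf0]

end CommRing

section Field

variable {σ K : Type*} [Field K]

lemma IsHomogeneous.isUnit_of_degree_zero {p : MvPolynomial σ K} (hp : p.IsHomogeneous 0)
    (hp0 : p ≠ 0) : IsUnit p := by
  rw [← totalDegree_zero_iff_isHomogeneous, totalDegree_eq_zero_iff_eq_C] at hp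
  rw [hp, isUnit_map_iff, isUnit_iff_ne_zero]
  exact fun h => hp0 (by rw [hp, h, map_zero])

variable (σ K)

lemma finrank_homogeneousSubmodule [Fintype σ] (n : ℕ) :
    Module.finrank K (homogeneousSubmodule σ K n) = (Fintype.card σ + n - 1).choose n := by
  classical
  have hdeg : {d : σ →₀ ℕ | d.degree = n} = ↑((Finset.univ : Finset σ).finsuppAntidiag n) := by
    ext d
    simp [Finsupp.degree_eq_sum]
  rw [homogeneousSubmodule_eq_finsupp_supported, hdeg]
  refine (Module.finrank_eq_nat_card_basis (basisRestrictSupport K _)).trans ?_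
  rw [Nat.card_coe_set_eq, Set.ncard_coe_finset, Finset.card_finsuppAntidiag_nat_eq_choose,
    Finset.card_univ]

instance [Finite σ] (n : ℕ) : Module.Finite K (homogeneousSubmodule σ K n) :=
  Module.Finite.iff_fg.mpr (homogeneousSubmodule_fg σ K n)

end Field

end MvPolynomial

lemma Nat.choose_two_add_choose_two_le {r s : ℕ} (hr : 1 ≤ r) (hs : 1 ≤ s) :
    (r + 2).choose 2 + (s + 2).choose 2 ≤ (r + s + 1).choose 2 + 3 := by
  have hQ : (((r + 2).choose 2 + (s + 2).choose 2 : ℕ) : ℚ) ≤ ((r + s + 1).choose 2 + 3 : ℕ) := by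
    push_cast [Nat.cast_choose_two]
    have : (1 : ℚ) ≤ r := by exact_mod_cast hr
    have : (1 : ℚ) ≤ s := by exact_mod_cast hs
    nlinarith
  exact_mod_cast hQ

section PointsInP2

variable {k : Type} [Field k]

lemma mem_ker_evalMapP2 {X : Finset (Fin 3 → k)} {l : ℕ} {p : homogeneousSubmodule (Fin 3) k l} :
    p ∈ LinearMap.ker (evalMapP2 k X l) ↔ ∀ x ∈ X, eval x p.1 = 0 :=
  LinearMap.mem_ker.trans ⟨fun hp x hx => congrFun hp ⟨x, hx⟩, fun hp => funext fun x => hp x x.2⟩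

lemma ker_evalMapP2_anti {W W' : Finset (Fin 3 → k)} (h : W ⊆ W') (l : ℕ) :
    LinearMap.ker (evalMapP2 k W' l) ≤ LinearMap.ker (evalMapP2 k W l) :=
  fun _ hp => mem_ker_evalMapP2.mpr fun x hx => mem_ker_evalMapP2.mp hp x (h hx)

lemma hilbertFunction_add_finrank_ker (X : Finset (Fin 3 → k)) (l : ℕ) :
    hilbertFunction k X l + Module.finrank k (LinearMap.ker (evalMapP2 k X l)) =
      (l + 2).choose 2 := by
  rw [hilbertFunction, LinearMap.finrank_range_add_finrank_ker, finrank_homogeneousSubmodule,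
    Fintype.card_fin, show 3 + l - 1 = l + 2 by omega, Nat.choose_symm_add]

lemma exists_subset_card_le_ker_evalMapP2_eq (X : Finset (Fin 3 → k)) (l : ℕ) :
    ∃ W ⊆ X, W.card ≤ (l + 2).choose 2 ∧
      LinearMap.ker (evalMapP2 k W l) = LinearMap.ker (evalMapP2 k X l) := by
  classical
  -- Greedily add a point of `X` where some form of `ker W` but not of `ker X` is nonzero:
  -- each point added drops `dim ker W`.
  have hgreedy : ∀ n, ∃ W ⊆ X, W.card ≤ n ∧
      (LinearMap.ker (evalMapP2 k W l) = LinearMap.ker (evalMapP2 k X l) ∨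
        Module.finrank k (LinearMap.ker (evalMapP2 k W l)) + n ≤ (l + 2).choose 2) := by
    intro n
    induction n with
    | zero =>
      refine ⟨∅, Finset.empty_subset X, le_rfl, Or.inr ?_⟩
      have := hilbertFunction_add_finrank_ker (∅ : Finset (Fin 3 → k)) l
      omega
    | succ n ih =>
      obtain ⟨W, hWX, hWn, hW⟩ := ih
      by_cases hWeq : LinearMap.ker (evalMapP2 k W l) = LinearMap.ker (evalMapP2 k X l)
      · exact ⟨W, hWX, hWn.trans n.le_succ, Or.inl hWeq⟩
      have hWrank := hW.resolve_left hWeq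
      obtain ⟨q, hqW, hqX⟩ := SetLike.exists_of_lt ((ker_evalMapP2_anti hWX l).lt_of_ne' hWeq)
      obtain ⟨x, hxX, hqx⟩ : ∃ x ∈ X, eval x q.1 ≠ 0 := by
        simpa using mt mem_ker_evalMapP2.mpr hqX
      have hlt : LinearMap.ker (evalMapP2 k (insert x W) l) < LinearMap.ker (evalMapP2 k W l) :=
        (ker_evalMapP2_anti (Finset.subset_insert x W) l).lt_of_not_ge fun hle =>
          hqx (mem_ker_evalMapP2.mp (hle hqW) x (Finset.mem_insert_self x W))
      refine ⟨insert x W, Finset.insert_subset hxX hWX,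
        (Finset.card_insert_le x W).trans (by omega), Or.inr ?_⟩
      have := Submodule.finrank_lt_finrank_of_lt hlt
      omega
  obtain ⟨W, hWX, hWcard, hW | hW⟩ := hgreedy ((l + 2).choose 2)
  · exact ⟨W, hWX, hWcard, hW⟩
  · have hWbot : LinearMap.ker (evalMapP2 k W l) = ⊥ := Submodule.finrank_eq_zero.mp (by omega)
    exact ⟨W, hWX, hWcard, le_antisymm (hWbot ▸ bot_le) (ker_evalMapP2_anti hWX l)⟩

lemma ker_evalMapP2_eq_bot_of_lt {X : Finset (Fin 3 → k)} {g r : ℕ}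
    (hg : g ∈ lowerBounds {i : ℕ | ∃ f ∈ homogeneousSubmodule (Fin 3) k i, f ≠ 0 ∧
      ∀ x ∈ X, eval x f = 0}) (hr : r < g) : LinearMap.ker (evalMapP2 k X r) = ⊥ :=
  (Submodule.eq_bot_iff _).mpr fun p hp => by
    by_contra hp0
    exact hr.not_ge (hg ⟨p, p.2, fun h => hp0 (Subtype.ext h), mem_ker_evalMapP2.mp hp⟩)

lemma UniformPosition.ker_evalMapP2_eq_bot {X : Finset (Fin 3 → k)} (hupp : UniformPosition k X)
    {l : ℕ} (hX : LinearMap.ker (evalMapP2 k X l) = ⊥) {Z : Finset (Fin 3 → k)} (hZX : Z ⊆ X)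
    (hZ : (l + 2).choose 2 ≤ Z.card) : LinearMap.ker (evalMapP2 k Z l) = ⊥ := by
  obtain ⟨W, hWX, hWcard, hW⟩ := exists_subset_card_le_ker_evalMapP2_eq X l
  obtain ⟨W', hWW', hW'X, hW'card⟩ :=
    Finset.exists_subsuperset_card_eq hWX (hWcard.trans hZ) (Finset.card_le_card hZX)
  have hW' : LinearMap.ker (evalMapP2 k W' l) = ⊥ :=
    le_bot_iff.mp (hX ▸ hW ▸ ker_evalMapP2_anti hWW' l)
  have hH := hupp Z W' hZX hW'X hW'card.symm l
  have hZrank := hilbertFunction_add_finrank_ker Z l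
  have hW'rank := hilbertFunction_add_finrank_ker W' l
  rw [hW', finrank_bot] at hW'rank
  exact Submodule.finrank_eq_zero.mp (by omega)

lemma UniformPosition.card_filter_eval_eq_zero_lt [DecidableEq k] {X : Finset (Fin 3 → k)}
    (hupp : UniformPosition k X) {l : ℕ} (hX : LinearMap.ker (evalMapP2 k X l) = ⊥)
    {p : MvPolynomial (Fin 3) k} (hp : p.IsHomogeneous l) (hp0 : p ≠ 0) :
    (X.filter fun x => eval x p = 0).card < (l + 2).choose 2 := by
  by_contra! hcard
  have hmem : (⟨p, hp⟩ : homogeneousSubmodule (Fin 3) k l) ∈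
      LinearMap.ker (evalMapP2 k (X.filter fun x => eval x p = 0) l) :=
    mem_ker_evalMapP2.mpr fun x hx => (Finset.mem_filter.mp hx).2
  rw [hupp.ker_evalMapP2_eq_bot hX (Finset.filter_subset _ X) hcard, Submodule.mem_bot] at hmem
  exact hp0 (congrArg Subtype.val hmem)

lemma UniformPosition.card_add_two_le {X : Finset (Fin 3 → k)} (hupp : UniformPosition k X)
    {a b : MvPolynomial (Fin 3) k} {r s : ℕ} (ha : a.IsHomogeneous r) (hb : b.IsHomogeneous s)
    (ha0 : a ≠ 0) (hb0 : b ≠ 0) (hr : LinearMap.ker (evalMapP2 k X r) = ⊥)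
    (hs : LinearMap.ker (evalMapP2 k X s) = ⊥) (hab : ∀ x ∈ X, eval x (a * b) = 0) :
    X.card + 2 ≤ (r + 2).choose 2 + (s + 2).choose 2 := by
  classical
  have hcover : X ⊆ X.filter (fun x => eval x a = 0) ∪ X.filter (fun x => eval x b = 0) := by
    intro x hx
    simpa [hx] using hab x hx
  have hX := (Finset.card_le_card hcover).trans (Finset.card_union_le _ _)
  have hXa := hupp.card_filter_eval_eq_zero_lt hr ha ha0
  have hXb := hupp.card_filter_eval_eq_zero_lt hs hb hb0
  omega

end PointsInP2

open MvPolynomial in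
theorem stmt19_general (k : Type) [Field k] (X : Finset (Fin 3 → k)) (d h g : ℕ)
    (hupp : UniformPosition k X)
    (hcard : X.card = (d + 2).choose 2 + h)
    (hg : IsLeast {i : ℕ | ∃ f ∈ homogeneousSubmodule (Fin 3) k i, f ≠ 0 ∧
      ∀ x ∈ X, eval x f = 0} g)
    (hcase : g ≤ d ∨ (g = d + 1 ∧ 2 ≤ h)) :
    ∀ f ∈ homogeneousSubmodule (Fin 3) k g, f ≠ 0 → (∀ x ∈ X, eval x f = 0) →
      Irreducible f := by
  intro f hf hf0 hfX
  obtain ⟨x₀, hx₀⟩ : X.Nonempty := by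
    rw [← Finset.card_pos, hcard]
    exact Nat.add_pos_left (Nat.choose_pos (by omega)) h
  refine ⟨fun hu => not_isUnit_zero (hfX x₀ hx₀ ▸ hu.map (eval x₀)), fun a b hab => ?_⟩
  by_contra! hnu
  have ha0 : a ≠ 0 := by rintro rfl; simp_all
  have hb0 : b ≠ 0 := by rintro rfl; simp_all
  obtain ⟨r, s, hrs, ha, hb⟩ := IsHomogeneous.exists_isHomogeneous_of_mul_eq hf hf0 hab.symm
  have hr : r ≠ 0 := by rintro rfl; exact hnu.1 (ha.isUnit_of_degree_zero ha0)
  have hs : s ≠ 0 := by rintro rfl; exact hnu.2 (hb.isUnit_of_degree_zero hb0)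
  have hX := hupp.card_add_two_le ha hb ha0 hb0 (ker_evalMapP2_eq_bot_of_lt hg.2 (by omega))
    (ker_evalMapP2_eq_bot_of_lt hg.2 (by omega)) (hab ▸ hfX)
  have hrs' := Nat.choose_two_add_choose_two_le (Nat.one_le_iff_ne_zero.mpr hr)
    (Nat.one_le_iff_ne_zero.mpr hs)
  have hd : (d + 2).choose 2 = (d + 1).choose 2 + (d + 1) := by
    rw [Nat.choose_succ_succ', Nat.choose_one_right, add_comm]
  rcases hcase with hgd | ⟨rfl, hh⟩
  · have := Nat.choose_le_choose 2 (show r + s + 1 ≤ d + 1 by omega)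
    omega
  · rw [show r + s + 1 = d + 2 by omega] at hrs'
    omega

open MvPolynomial in
/-- Let `X ⊆ ℙ²` be a set of `n = C(d+2,2) + h` points, `0 ≤ h ≤ d+1`, in uniform position, and
let `g` be the least degree of a curve containing `X`. If `g ≤ d`, or `g = d+1` and `h ≥ 2`,
then every curve of degree `g` containing `X` is irreducible. -/
theorem stmt19 (k : Type) [Field k] [IsAlgClosed k] (X : Finset (Fin 3 → k)) (d h g : ℕ)
    (hdist : ProjDistinct k X) (hupp : UniformPosition k X)
    (hcard : X.card = (d + 2).choose 2 + h) (hh : h ≤ d + 1)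
    (hg : IsLeast {i : ℕ | ∃ f ∈ homogeneousSubmodule (Fin 3) k i, f ≠ 0 ∧
      ∀ x ∈ X, eval x f = 0} g)
    (hcase : g ≤ d ∨ (g = d + 1 ∧ 2 ≤ h)) :
    ∀ f ∈ homogeneousSubmodule (Fin 3) k g, f ≠ 0 → (∀ x ∈ X, eval x f = 0) →
      Irreducible f :=
  stmt19_general k X d h g hupp hcard hg hcase
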